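/- arXiv:1703.00336 — 2 statements merged into one kernel-verified Lean document; each statement's English description precedes it below -/
import Mathlib

section
/- Let V and W be finite-dimensional real vector spaces, L : V → W a linear map, and A ⊆ V a closed convex cone such that L(v) ≠ 0 for all nonzero v ∈ A. Then L(A) is closed in W. -/
/-!
Normalising to the unit sphere, `‖L u‖` is bounded below on the compact set `A ∩ sphere 0 1`, where
it does not vanish, so `‖v‖ ≤ C * ‖L v‖` on the cone. Hence the points of `A` that `L` maps near a
limit point `y` of `L '' A` form a compact set, whose image is closed and contains `y`.
-/

open Metric

section

variable {V W : Type*} [NormedAddCommGroup V] [NormedAddCommGroup W]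

theorem isClosed_image_of_norm_le_mul_norm [ProperSpace V] {f : V → W} (hf : Continuous f)
    {A : Set V} (hA : IsClosed A) {C : ℝ} (hC : ∀ v ∈ A, ‖v‖ ≤ C * ‖f v‖) :
    IsClosed (f '' A) := by
  refine closure_subset_iff_isClosed.mp fun y hy => ?_
  set K := A ∩ f ⁻¹' closedBall y 1
  have hK_bdd : Bornology.IsBounded K := by
    refine isBounded_iff_forall_norm_le.mpr ⟨|C| * (‖y‖ + 1), fun v hv => ?_⟩
    calc ‖v‖ ≤ C * ‖f v‖ := hC v hv.1
      _ ≤ |C| * ‖f v‖ := by gcongr; exact le_abs_self C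
      _ ≤ |C| * (‖y‖ + 1) := by gcongr; exact norm_le_of_mem_closedBall hv.2
  have hK : IsCompact K :=
    isCompact_of_isClosed_isBounded (hA.inter (isClosed_closedBall.preimage hf)) hK_bdd
  have hy_K : y ∈ closure (f '' K) := by
    refine Metric.mem_closure_iff.mpr fun ε hε => ?_
    obtain ⟨_, ⟨v, hv, rfl⟩, hdist⟩ := Metric.mem_closure_iff.mp hy (min ε 1) (by positivity)
    refine ⟨f v, ⟨v, ⟨hv, ?_⟩, rfl⟩, hdist.trans_le (min_le_left _ _)⟩
    exact mem_closedBall'.mpr (hdist.le.trans (min_le_right _ _))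
  exact Set.image_mono Set.inter_subset_left ((hK.image hf).isClosed.closure_subset hy_K)

variable [NormedSpace ℝ V] [NormedSpace ℝ W] [ProperSpace V]

theorem exists_norm_le_mul_norm_of_cone {A : Set V} (hA : IsClosed A)
    (hsmul : ∀ t : ℝ, 0 ≤ t → ∀ v ∈ A, t • v ∈ A) {L : V →ₗ[ℝ] W} (hL : Continuous L)
    (hker : ∀ v ∈ A, v ≠ 0 → L v ≠ 0) :
    ∃ C, ∀ v ∈ A, ‖v‖ ≤ C * ‖L v‖ := by
  set S := A ∩ sphere (0 : V) 1
  have hS : IsCompact S := (isCompact_sphere 0 1).inter_left hA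
  have hLS : ∀ u ∈ S, ‖L u‖ ≠ 0 := fun u hu =>
    norm_ne_zero_iff.mpr (hker u hu.1 (ne_of_mem_sphere hu.2 one_ne_zero))
  obtain ⟨C, hC⟩ := hS.exists_bound_of_continuousOn (hL.norm.continuousOn.inv₀ hLS)
  refine ⟨C, fun v hv => ?_⟩
  rcases eq_or_ne v 0 with rfl | hv0
  · simp
  have hu : ‖v‖⁻¹ • v ∈ S :=
    ⟨hsmul _ (by positivity) v hv, mem_sphere_zero_iff_norm.mpr (norm_smul_inv_norm hv0)⟩
  have hLv : 0 < ‖L v‖ := norm_pos_iff.mpr (hker v hv hv0)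
  have hLu : ‖(‖L (‖v‖⁻¹ • v)‖)⁻¹‖ = ‖v‖ / ‖L v‖ := by
    rw [map_smul, norm_inv, norm_norm, norm_smul, norm_inv, norm_norm, mul_inv, inv_inv,
      div_eq_mul_inv]
  rw [← div_le_iff₀ hLv, ← hLu]
  exact hC _ hu

end

theorem stmt_1_general {V W : Type*} [NormedAddCommGroup V] [NormedSpace ℝ V] [FiniteDimensional ℝ V]
    [NormedAddCommGroup W] [NormedSpace ℝ W]
    (L : V →ₗ[ℝ] W) (A : Set V) (hclosed : IsClosed A)
    (hsmul : ∀ t : ℝ, 0 ≤ t → ∀ v ∈ A, t • v ∈ A)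
    (hker : ∀ v ∈ A, v ≠ 0 → L v ≠ 0) :
    IsClosed (L '' A) := by
  have hL : Continuous L := L.continuous_of_finiteDimensional
  obtain ⟨C, hC⟩ := exists_norm_le_mul_norm_of_cone hclosed hsmul hL hker
  exact isClosed_image_of_norm_le_mul_norm hL hclosed hC

/-- The image of a closed convex cone under a linear map injective on the cone is closed. -/
theorem stmt_1 {V W : Type*} [NormedAddCommGroup V] [NormedSpace ℝ V] [FiniteDimensional ℝ V]
    [NormedAddCommGroup W] [NormedSpace ℝ W] [FiniteDimensional ℝ W]
    (L : V →ₗ[ℝ] W) (A : Set V) (hclosed : IsClosed A)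
    (hadd : ∀ u ∈ A, ∀ v ∈ A, u + v ∈ A)
    (hsmul : ∀ t : ℝ, 0 ≤ t → ∀ v ∈ A, t • v ∈ A)
    (hker : ∀ v ∈ A, v ≠ 0 → L v ≠ 0) :
    IsClosed (L '' A) :=
  stmt_1_general L A hclosed hsmul hker
end

section
/- Let S be a divisibility-closed additive sub-semigroup of ℤ² containing v, −v for a primitive vector v ≠ 0, and containing some w with det(v, w) ≠ 0 (where det is the standard 2×2 determinant pairing). Then S contains every u ∈ ℤ² with det(v, u) having the same sign as det(v, w), and every integer multiple of v. -/
/-!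
Positive multiples of `w` and all integer multiples of `v` lie in `S`. By Cramer's rule
`det(v, w) • u = det(u, w) • v + det(v, u) • w`; multiplying by `det(v, w)` makes the
coefficient of `w` positive exactly when `det(v, u)` has the sign of `det(v, w)`, so a positive
multiple of `u` lies in `S`, and divisibility closure gives `u ∈ S`.
-/

section AddClosed

variable {M : Type*} {S : Set M}

theorem nsmul_mem_of_add_mem [AddMonoid M] (hS : ∀ u ∈ S, ∀ w ∈ S, u + w ∈ S) {x : M}
    (hx : x ∈ S) {n : ℕ} (hn : n ≠ 0) : n • x ∈ S := by
  obtain ⟨n, rfl⟩ := Nat.exists_eq_succ_of_ne_zero hn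
  induction n with
  | zero => simpa using hx
  | succ n ih => simpa [succ_nsmul] using hS _ (ih n.succ_ne_zero) _ hx

theorem zsmul_mem_of_add_mem [AddGroup M] (hS : ∀ u ∈ S, ∀ w ∈ S, u + w ∈ S) {x : M}
    (hx : x ∈ S) {m : ℤ} (hm : 0 < m) : m • x ∈ S := by
  lift m to ℕ using hm.le
  exact_mod_cast nsmul_mem_of_add_mem hS hx (by omega)

theorem zsmul_mem_of_add_mem_of_neg_mem [AddGroup M] (hS : ∀ u ∈ S, ∀ w ∈ S, u + w ∈ S)
    {x : M} (hx : x ∈ S) (hx' : -x ∈ S) (k : ℤ) : k • x ∈ S := by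
  rcases lt_trichotomy k 0 with hk | rfl | hk
  · simpa using zsmul_mem_of_add_mem hS hx' (neg_pos.mpr hk)
  · simpa using hS x hx (-x) hx'
  · exact zsmul_mem_of_add_mem hS hx hk

end AddClosed

theorem Prod.det_smul_eq_add {R : Type*} [CommRing R] (u v w : R × R) :
    (v.1 * w.2 - v.2 * w.1) • u =
      (u.1 * w.2 - u.2 * w.1) • v + (v.1 * u.2 - v.2 * u.1) • w := by
  ext <;> simp <;> ring

theorem stmt_18_general (S : Set (ℤ × ℤ))
    (haddS : ∀ u ∈ S, ∀ w ∈ S, u + w ∈ S)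
    (hdiv : ∀ u : ℤ × ℤ, ∀ k : ℕ, 1 ≤ k → (k : ℤ) • u ∈ S → u ∈ S)
    (v : ℤ × ℤ)
    (hv : v ∈ S) (hv' : -v ∈ S)
    (w : ℤ × ℤ) (hw : w ∈ S) :
    (∀ u : ℤ × ℤ, 0 < (v.1 * w.2 - v.2 * w.1) * (v.1 * u.2 - v.2 * u.1) → u ∈ S) ∧
    (∀ k : ℤ, k • v ∈ S) := by
  have hmul_v := zsmul_mem_of_add_mem_of_neg_mem haddS hv hv'
  refine ⟨fun u hu => ?_, hmul_v⟩
  set D := v.1 * w.2 - v.2 * w.1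
  have hD : D ≠ 0 := by rintro h; simp [h] at hu
  have hsq : ((D.natAbs ^ 2 : ℕ) : ℤ) = D * D := by rw [Nat.cast_pow, Int.natAbs_sq, sq]
  have hcomb : ((D.natAbs ^ 2 : ℕ) : ℤ) • u =
      (D * (u.1 * w.2 - u.2 * w.1)) • v + (D * (v.1 * u.2 - v.2 * u.1)) • w := by
    rw [hsq, mul_smul, Prod.det_smul_eq_add u v w, smul_add, smul_smul, smul_smul]
  refine hdiv u _ (Nat.one_le_iff_ne_zero.mpr (pow_ne_zero 2 (Int.natAbs_ne_zero.mpr hD))) ?_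
  rw [hcomb]
  exact haddS _ (hmul_v _) _ (zsmul_mem_of_add_mem haddS hw hu)

/-- A divisibility-closed additive sub-semigroup of `ℤ²` containing `±v` for a
primitive `v` and some `w` with `det(v, w) ≠ 0` contains every `u` with `det(v, u)` of
the same sign as `det(v, w)`, and every integer multiple of `v`. -/
theorem stmt_18 (S : Set (ℤ × ℤ))
    (haddS : ∀ u ∈ S, ∀ w ∈ S, u + w ∈ S)
    (hdiv : ∀ u : ℤ × ℤ, ∀ k : ℕ, 1 ≤ k → (k : ℤ) • u ∈ S → u ∈ S)
    (v : ℤ × ℤ) (hvne : v ≠ 0) (hprim : IsCoprime v.1 v.2)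
    (hv : v ∈ S) (hv' : -v ∈ S)
    (w : ℤ × ℤ) (hw : w ∈ S) (hdet : v.1 * w.2 - v.2 * w.1 ≠ 0) :
    (∀ u : ℤ × ℤ, 0 < (v.1 * w.2 - v.2 * w.1) * (v.1 * u.2 - v.2 * u.1) → u ∈ S) ∧
    (∀ k : ℤ, k • v ∈ S) :=
  stmt_18_general S haddS hdiv v hv hv' w hw
end
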